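/- arXiv:0801.0019 — 2 statements merged into one kernel-verified Lean document; each statement's English description precedes it below -/
import Mathlib

section
/- Energy trapping: let K, P ≥ 0 with P ≤ C^4 K² (C > 0), K < 1/C^4, and K/2 - P/4 ≤ (1-δ₀)/(4C^4) for some δ₀ ∈ (0,1). Set δ̄ = δ₀^{1/2}. Then: (i) K - P ≥ (δ̄/2) K; (ii) K ≤ (1-δ̄)/C^4; (iii) K/2 - P/4 ≥ 0. -/
/-!
In the normalised variable `k = C⁴ K` the bound `P ≤ C⁴ K²` turns the energy hypothesis into
`2k - k² ≤ 1 - δ₀`, i.e. `δ₀ ≤ (1 - k)²`; since `k < 1` this is the gap `√δ₀ ≤ 1 - k`, which is (ii).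
Then `K - P ≥ K - C⁴ K² = (1 - k) K ≥ √δ₀ K` gives (i), and (iii) follows from `P ≤ K`.
-/

lemma sqrt_le_one_sub_of_energy_le {c K P δ : ℝ} (hc : 0 < c) (hcK : c * K ≤ 1)
    (hPK : P ≤ c * K ^ 2) (hE : K / 2 - P / 4 ≤ (1 - δ) / (4 * c)) :
    √δ ≤ 1 - c * K := by
  have hE' : 2 * (c * K) - c * P ≤ 1 - δ := by
    rw [le_div_iff₀ (by positivity)] at hE
    linarith
  have hcP : c * P ≤ (c * K) ^ 2 := by nlinarith
  exact Real.sqrt_le_iff.2 ⟨by linarith, by nlinarith⟩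

lemma mul_le_sub_of_le_one_sub {c K P s : ℝ} (hK : 0 ≤ K) (hPK : P ≤ c * K ^ 2)
    (hs : s ≤ 1 - c * K) : s * K ≤ K - P :=
  calc s * K ≤ (1 - c * K) * K := mul_le_mul_of_nonneg_right hs hK
    _ = K - c * K ^ 2 := by ring
    _ ≤ K - P := by linarith

theorem stmt6_general (C δ₀ K P : ℝ) (hC : 0 < C)
    (hK0 : 0 ≤ K) (hPK : P ≤ C ^ 4 * K ^ 2)
    (hK : K < 1 / C ^ 4)
    (hE : K / 2 - P / 4 ≤ (1 - δ₀) / (4 * C ^ 4)) :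
    (Real.sqrt δ₀ / 2) * K ≤ K - P ∧
      K ≤ (1 - Real.sqrt δ₀) / C ^ 4 ∧
      0 ≤ K / 2 - P / 4 := by
  have hc : 0 < C ^ 4 := by positivity
  have hcK : C ^ 4 * K < 1 := by rwa [lt_div_iff₀' hc] at hK
  have hgap := sqrt_le_one_sub_of_energy_le hc hcK.le hPK hE
  have hvirial : √δ₀ * K ≤ K - P := mul_le_sub_of_le_one_sub hK0 hPK hgap
  have hnonneg : 0 ≤ √δ₀ * K := mul_nonneg (Real.sqrt_nonneg δ₀) hK0
  refine ⟨by linarith, (le_div_iff₀' hc).2 (by linarith), by linarith⟩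

theorem stmt6 (C δ₀ K P : ℝ) (hC : 0 < C) (hδ₀ : δ₀ ∈ Set.Ioo (0:ℝ) 1)
    (hK0 : 0 ≤ K) (hP0 : 0 ≤ P) (hPK : P ≤ C ^ 4 * K ^ 2)
    (hK : K < 1 / C ^ 4)
    (hE : K / 2 - P / 4 ≤ (1 - δ₀) / (4 * C ^ 4)) :
    (Real.sqrt δ₀ / 2) * K ≤ K - P ∧
      K ≤ (1 - Real.sqrt δ₀) / C ^ 4 ∧
      0 ≤ K / 2 - P / 4 :=
  stmt6_general C δ₀ K P hC hK0 hPK hK hE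
end

section
/- Blow-up side of the variational dichotomy (abstract version): let K ≥ 0, P ≥ 0, C > 0, δ₀ ∈ (0,1) with P ≤ C^4 K², K/2 - P/4 < (1-δ₀)/(4C^4), and K > 1/C^4. Then there exists δ̃ > 0 depending only on δ₀ and C such that K > (1+δ̃)/C^4, and consequently K - P = 4(K/2 - P/4) - K < -(δ₀ + δ̃)/C^4 < 0. -/
/-!
Normalise by `x = C⁴K`, `p = C⁴P`. The bound `p ≤ x²` and the energy bound `2x - p < 1 - δ₀`
give `(x - 1)² > δ₀`, and since `x > 1` this is a gap `x - 1 > √δ₀` that depends on `δ₀` alone.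
Feeding `p > 2x - 1 + δ₀` back into `x - p` then gives `x - p < 1 - x - δ₀ < -(δ₀ + √δ₀)`.
-/

section Normalized

variable {x p δ : ℝ}

theorem sqrt_lt_sub_one_of_two_mul_sub_lt (hx : 1 < x) (hp : p ≤ x ^ 2)
    (hE : 2 * x - p < 1 - δ) : √δ < x - 1 :=
  (Real.sqrt_lt' (by linarith)).2 (by nlinarith)

theorem sub_lt_neg_add_sqrt_of_two_mul_sub_lt (hx : 1 < x) (hp : p ≤ x ^ 2)
    (hE : 2 * x - p < 1 - δ) : x - p < -(δ + √δ) := by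
  linarith [sqrt_lt_sub_one_of_two_mul_sub_lt hx hp hE]

end Normalized

theorem stmt8 (C δ₀ : ℝ) (hC : 0 < C) (hδ₀ : δ₀ ∈ Set.Ioo (0:ℝ) 1) :
    ∃ δt : ℝ, 0 < δt ∧
      ∀ K P : ℝ, 0 ≤ K → 0 ≤ P → P ≤ C ^ 4 * K ^ 2 →
        K / 2 - P / 4 < (1 - δ₀) / (4 * C ^ 4) → 1 / C ^ 4 < K →
        (1 + δt) / C ^ 4 < K ∧
        K - P < -((δ₀ + δt) / C ^ 4) ∧
        -((δ₀ + δt) / C ^ 4) < 0 := by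
  obtain ⟨hδ₀, -⟩ := hδ₀
  have hc : 0 < C ^ 4 := by positivity
  refine ⟨√δ₀, Real.sqrt_pos.2 hδ₀, fun K P _ _ hPK hE hK => ?_⟩
  have hx : 1 < C ^ 4 * K := by rwa [div_lt_iff₀' hc] at hK
  have hp : C ^ 4 * P ≤ (C ^ 4 * K) ^ 2 := by
    calc C ^ 4 * P ≤ C ^ 4 * (C ^ 4 * K ^ 2) := by gcongr
      _ = (C ^ 4 * K) ^ 2 := by ring
  have hE' : 2 * (C ^ 4 * K) - C ^ 4 * P < 1 - δ₀ := by
    rw [lt_div_iff₀ (by positivity)] at hE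
    linarith
  refine ⟨?_, ?_, neg_neg_iff_pos.2 (by positivity)⟩
  · rw [div_lt_iff₀' hc]
    linarith [sqrt_lt_sub_one_of_two_mul_sub_lt hx hp hE']
  · rw [← neg_div, lt_div_iff₀' hc]
    linarith [sub_lt_neg_add_sqrt_of_two_mul_sub_lt hx hp hE']
end
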